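/- Let n_ν < n_{ν-1} < … < n_1 be pairwise relatively prime positive integers, N = Π_{i=1}^ν n_i, g_i = N / n_i, and S = ⟨g_1, …, g_ν⟩. Then the Apéry set of S with respect to its multiplicity m = g_1 is γ-rectangular; in particular m = Π_{i=2}^ν (γ_i + 1). -/

import Mathlib

open Finset

/-- `S` is a numerical semigroup: a submonoid of `(ℕ, +)` with finite complement. -/
def IsNumSgp (S : Set ℕ) : Prop :=
  0 ∈ S ∧ (∀ a ∈ S, ∀ b ∈ S, a + b ∈ S) ∧ (Sᶜ : Set ℕ).Finite

/-- `s` belongs to the Apéry set of `S` with respect to `m`: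
`s ∈ S` and `s - m ∉ S` (i.e. no `u ∈ S` with `u + m = s`). -/
def InApery (S : Set ℕ) (m s : ℕ) : Prop :=
  s ∈ S ∧ ∀ u ∈ S, u + m ≠ s

def AperySet (S : Set ℕ) (m : ℕ) : Set ℕ := {s | InApery S m s}

/-- `ordS S s` is the largest `h` such that `s` is a sum of `h` nonzero elements of `S`. -/
noncomputable def ordS (S : Set ℕ) (s : ℕ) : ℕ :=
  sSup {h : ℕ | ∃ f : Fin h → ℕ, (∀ j, f j ∈ S ∧ f j ≠ 0) ∧ ∑ j, f j = s}

/-- `g` generates `S`. -/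
def Generates (S : Set ℕ) {ν : ℕ} (g : Fin ν → ℕ) : Prop :=
  ∀ s, s ∈ S ↔ ∃ lam : Fin ν → ℕ, ∑ i, lam i * g i = s

/-- `g` is a minimal generating system of `S`: it generates `S`
and no `g i` is generated by the remaining generators. -/
def MinimalGen (S : Set ℕ) {ν : ℕ} (g : Fin ν → ℕ) : Prop :=
  Generates S g ∧ ∀ i, ¬ ∃ lam : Fin ν → ℕ, lam i = 0 ∧ ∑ j, lam j * g j = g i

/-- `lam` is a maximal representation of `s`: the coefficient sum equals `ordS S s`. -/
def IsMaxRep (S : Set ℕ) {ν : ℕ} (g : Fin ν → ℕ) (lam : Fin ν → ℕ) (s : ℕ) : Prop :=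
  ∑ i, lam i * g i = s ∧ ∑ i, lam i = ordS S s

/-- `s` has a unique maximal representation. -/
def UniqueMaxRep (S : Set ℕ) {ν : ℕ} (g : Fin ν → ℕ) (s : ℕ) : Prop :=
  ∃! lam : Fin ν → ℕ, IsMaxRep S g lam s

/-- `β_i = max {h | h g_i ∈ Ap(S) and ord(h g_i) = h}`. -/
noncomputable def betaN (S : Set ℕ) (m : ℕ) {ν : ℕ} (g : Fin ν → ℕ) (i : Fin ν) : ℕ :=
  sSup {h : ℕ | InApery S m (h * g i) ∧ ordS S (h * g i) = h}

/-- `γ_i = max {h | h g_i ∈ Ap(S), ord(h g_i) = h and h g_i has a unique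
maximal representation}`. -/
noncomputable def gammaN (S : Set ℕ) (m : ℕ) {ν : ℕ} (g : Fin ν → ℕ) (i : Fin ν) : ℕ :=
  sSup {h : ℕ | InApery S m (h * g i) ∧ ordS S (h * g i) = h ∧ UniqueMaxRep S g (h * g i)}

/-- `B = {Σ_{i≥2} λ_i g_i : 0 ≤ λ_i ≤ β_i}`. -/
def Bset (S : Set ℕ) (m : ℕ) {ν : ℕ} [NeZero ν] (g : Fin ν → ℕ) : Set ℕ :=
  {s | ∃ lam : Fin ν → ℕ, lam 0 = 0 ∧ (∀ i, lam i ≤ betaN S m g i) ∧ ∑ i, lam i * g i = s}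

/-- `Γ = {Σ_{i≥2} λ_i g_i : 0 ≤ λ_i ≤ γ_i}`. -/
def GammaSet (S : Set ℕ) (m : ℕ) {ν : ℕ} [NeZero ν] (g : Fin ν → ℕ) : Set ℕ :=
  {s | ∃ lam : Fin ν → ℕ, lam 0 = 0 ∧ (∀ i, lam i ≤ gammaN S m g i) ∧ ∑ i, lam i * g i = s}

/-- `s ⪯_M t`. -/
def predM (S : Set ℕ) (s t : ℕ) : Prop :=
  ∃ u ∈ S, s + u = t ∧ ordS S s + ordS S u = ordS S t

/-!
Since `n j * g j = N = n 0 * g 0`, trading `n j` copies of `g j` (`j ≠ 0`) for `n 0` copies of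
`g 0` turns any representation `∑ λ k * g k` of `s` into one with `λ j < n j` for all `j ≠ 0`,
without losing summands, and gaining some whenever a trade happens, because `n j < n 0`.
Reading `s` modulo `n j`, which divides every `g k` except `g j`, that reduced representation is
unique. So it is the unique maximal representation of `s`, `s` lies in the Apéry set exactly when
its `g 0`-coefficient vanishes, and `γ j = n j - 1`; the Apéry set is the box `λ j < n j`, of size
`∏_{j ≠ 0} n j = g 0`.
-/

section Representations

variable {ν : ℕ} {S : Set ℕ} {g : Fin ν → ℕ}

theorem Generates.sum_mul_mem (hgen : Generates S g) (lam : Fin ν → ℕ) :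
    ∑ i, lam i * g i ∈ S :=
  (hgen _).2 ⟨lam, rfl⟩

theorem Generates.mul_mem (hgen : Generates S g) (k : ℕ) (i : Fin ν) : k * g i ∈ S :=
  (hgen _).2 ⟨Pi.single i k, by simp [Pi.single_apply, ite_mul]⟩

theorem Generates.add_mem (hgen : Generates S g) {a b : ℕ} (ha : a ∈ S) (hb : b ∈ S) :
    a + b ∈ S := by
  obtain ⟨lam, rfl⟩ := (hgen a).1 ha
  obtain ⟨mu, rfl⟩ := (hgen b).1 hb
  exact (hgen _).2 ⟨lam + mu, by simp [add_mul, sum_add_distrib]⟩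

theorem sum_single_mul (g : Fin ν → ℕ) (i : Fin ν) (c : ℕ) :
    ∑ k, (Pi.single i c : Fin ν → ℕ) k * g k = c * g i := by
  simp [Pi.single_apply, ite_mul]

theorem sum_add_single_mul (g lam : Fin ν → ℕ) (i : Fin ν) :
    ∑ k, (lam + (Pi.single i 1 : Fin ν → ℕ)) k * g k = ∑ k, lam k * g k + g i := by
  simp [add_mul, sum_add_distrib, Pi.single_apply]

theorem sum_mul_modEq_single {m : ℕ} {j : Fin ν} (hdvd : ∀ k, k ≠ j → m ∣ g k)
    (lam : Fin ν → ℕ) : ∑ k, lam k * g k ≡ lam j * g j [MOD m] := by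
  rw [← add_sum_erase _ _ (mem_univ j)]
  have hrest : m ∣ ∑ k ∈ univ.erase j, lam k * g k :=
    dvd_sum fun k hk => (hdvd k (ne_of_mem_erase hk)).mul_left _
  simpa using (Nat.modEq_zero_iff_dvd.2 hrest).add_left (lam j * g j)

theorem exists_fin_sum_eq_sum_mul (g lam : Fin ν → ℕ) :
    ∃ f : Fin (∑ i, lam i) → ℕ, (∀ j, ∃ i, f j = g i) ∧ ∑ j, f j = ∑ i, lam i * g i := by
  refine ⟨fun j => g (finSigmaFinEquiv.symm j).1, fun j => ⟨_, rfl⟩, ?_⟩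
  rw [finSigmaFinEquiv.symm.sum_comp (fun p => g p.1), Fintype.sum_sigma]
  simp

theorem Generates.exists_rep_of_fin_sum (hgen : Generates S g) {h : ℕ} (f : Fin h → ℕ)
    (hf : ∀ j, f j ∈ S ∧ f j ≠ 0) :
    ∃ mu : Fin ν → ℕ, ∑ i, mu i * g i = ∑ j, f j ∧ h ≤ ∑ i, mu i := by
  choose lam hlam using fun j => (hgen (f j)).1 (hf j).1
  refine ⟨fun i => ∑ j, lam j i, ?_, ?_⟩
  · simp_rw [sum_mul]
    rw [sum_comm]
    exact sum_congr rfl fun j _ => hlam j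
  · have hpos : ∀ j, 1 ≤ ∑ i, lam j i := fun j =>
      Nat.one_le_iff_ne_zero.2 fun h0 => (hf j).2 <| by
        rw [← hlam j]; simp [sum_eq_zero_iff.1 h0]
    calc h = ∑ _j : Fin h, 1 := by simp
      _ ≤ ∑ j, ∑ i, lam j i := sum_le_sum fun j _ => hpos j
      _ = ∑ i, ∑ j, lam j i := sum_comm

theorem Generates.ordS_eq (hgen : Generates S g) (hg : ∀ i, g i ≠ 0) (lam : Fin ν → ℕ)
    (hmax : ∀ mu : Fin ν → ℕ, ∑ i, mu i * g i = ∑ i, lam i * g i → ∑ i, mu i ≤ ∑ i, lam i) :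
    ordS S (∑ i, lam i * g i) = ∑ i, lam i := by
  refine IsGreatest.csSup_eq ⟨?_, ?_⟩
  · obtain ⟨f, hfg, hf⟩ := exists_fin_sum_eq_sum_mul g lam
    refine ⟨f, fun j => ?_, hf⟩
    obtain ⟨i, hi⟩ := hfg j
    exact hi ▸ ⟨by simpa using hgen.mul_mem 1 i, hg i⟩
  · rintro h ⟨f, hf, hsum⟩
    obtain ⟨mu, hmu, hh⟩ := hgen.exists_rep_of_fin_sum f hf
    exact hh.trans (hmax mu (hmu.trans hsum))

end Representations

theorem div_eq_prod_erase {ι : Type*} [Fintype ι] [DecidableEq ι] {n : ι → ℕ}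
    (hpos : ∀ i, 0 < n i) (i : ι) : (∏ k, n k) / n i = ∏ k ∈ univ.erase i, n k := by
  rw [← mul_prod_erase _ _ (mem_univ i), Nat.mul_div_cancel_left _ (hpos i)]

/-- The properties of `g i = N / n i`, `N = ∏ i, n i`, for pairwise coprime `n i` of which
`n 0` is the largest. -/
structure IsCofactorSystem {ν : ℕ} [NeZero ν] (n g : Fin ν → ℕ) (N : ℕ) : Prop where
  pos : 0 < N
  mul_eq : ∀ i, n i * g i = N
  dvd : ∀ i j, i ≠ j → n i ∣ g j
  coprime : ∀ i, Nat.Coprime (n i) (g i)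
  n_lt : ∀ j, j ≠ 0 → n j < n 0

theorem isCofactorSystem_of_pairwise_coprime {ν : ℕ} [NeZero ν] {n g : Fin ν → ℕ} {N : ℕ}
    (hpos : ∀ i, 0 < n i) (hanti : StrictAnti n)
    (hcop : ∀ i j, i ≠ j → Nat.Coprime (n i) (n j))
    (hN : N = ∏ i, n i) (hg : ∀ i, g i = N / n i) : IsCofactorSystem n g N := by
  obtain rfl : g = fun i => ∏ k ∈ univ.erase i, n k :=
    funext fun i => by rw [hg, hN, div_eq_prod_erase hpos]
  subst hN
  exact {
    pos := prod_pos fun i _ => hpos i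
    mul_eq := fun i => mul_prod_erase _ _ (mem_univ i)
    dvd := fun i _ hij => dvd_prod_of_mem _ (mem_erase.2 ⟨hij, mem_univ i⟩)
    coprime := fun i => Nat.Coprime.prod_right fun k hk => hcop i k (ne_of_mem_erase hk).symm
    n_lt := fun _ hj => hanti (Fin.pos_iff_ne_zero.2 hj) }

def IsReducedRep {ν : ℕ} [NeZero ν] (n lam : Fin ν → ℕ) : Prop :=
  ∀ j, j ≠ 0 → lam j < n j

/-- Trades every block of `n k` copies of `g k` in `mu` for `n 0` copies of `g 0`. -/
def reduceRep {ν : ℕ} [NeZero ν] (n mu : Fin ν → ℕ) : Fin ν → ℕ :=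
  fun k => mu k % n k + (Pi.single 0 (∑ j, mu j / n j * n 0) : Fin ν → ℕ) k

namespace IsCofactorSystem

variable {ν : ℕ} [NeZero ν] {n g : Fin ν → ℕ} {N : ℕ} {S : Set ℕ}

theorem n_pos (hc : IsCofactorSystem n g N) (i : Fin ν) : 0 < n i :=
  Nat.pos_of_mul_pos_right (hc.pos.trans_eq (hc.mul_eq i).symm)

theorem g_pos (hc : IsCofactorSystem n g N) (i : Fin ν) : 0 < g i :=
  Nat.pos_of_mul_pos_left (hc.pos.trans_eq (hc.mul_eq i).symm)

theorem n_le (hc : IsCofactorSystem n g N) (i : Fin ν) : n i ≤ n 0 := by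
  rcases eq_or_ne i 0 with rfl | hi
  exacts [le_rfl, (hc.n_lt i hi).le]

theorem isReducedRep_reduceRep (hc : IsCofactorSystem n g N) (mu : Fin ν → ℕ) :
    IsReducedRep n (reduceRep n mu) := fun j hj => by
  simpa [reduceRep, Pi.single_apply, hj] using Nat.mod_lt _ (hc.n_pos j)

theorem sum_reduceRep_mul (hc : IsCofactorSystem n g N) (mu : Fin ν → ℕ) :
    ∑ k, reduceRep n mu k * g k = ∑ k, mu k * g k := by
  have hblock : ∀ k, mu k % n k * g k + mu k / n k * N = mu k * g k := fun k => by
    rw [← hc.mul_eq k, ← mul_assoc, mul_comm (mu k / n k), ← add_mul, Nat.mod_add_div]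
  rw [← sum_congr rfl fun k _ => hblock k, ← hc.mul_eq 0]
  simp only [reduceRep, add_mul, sum_add_distrib, sum_single_mul, sum_mul, mul_assoc]

theorem sum_reduceRep (hc : IsCofactorSystem n g N) (mu : Fin ν → ℕ) :
    ∑ k, reduceRep n mu k = ∑ k, mu k + ∑ k, mu k / n k * (n 0 - n k) := by
  have hblock : ∀ k, mu k % n k + mu k / n k * n 0 = mu k + mu k / n k * (n 0 - n k) :=
    fun k => by
      obtain ⟨d, hd⟩ := Nat.exists_eq_add_of_le (hc.n_le k)
      have := Nat.mod_add_div (mu k) (n k)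
      rw [hd, Nat.add_sub_cancel_left]
      linarith
  rw [← sum_add_distrib, ← sum_congr rfl fun k _ => hblock k]
  simp [reduceRep, sum_add_distrib]

theorem sum_le_sum_reduceRep (hc : IsCofactorSystem n g N) (mu : Fin ν → ℕ) :
    ∑ k, mu k ≤ ∑ k, reduceRep n mu k :=
  (hc.sum_reduceRep mu).symm ▸ Nat.le_add_right _ _

theorem sum_lt_sum_reduceRep (hc : IsCofactorSystem n g N) {mu : Fin ν → ℕ}
    (hmu : ¬ IsReducedRep n mu) : ∑ k, mu k < ∑ k, reduceRep n mu k := by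
  obtain ⟨j, hj, hle⟩ : ∃ j, j ≠ 0 ∧ n j ≤ mu j := by simpa [IsReducedRep] using hmu
  rw [hc.sum_reduceRep]
  refine Nat.lt_add_of_pos_right (sum_pos' (fun _ _ => Nat.zero_le _) ⟨j, mem_univ j, ?_⟩)
  exact Nat.mul_pos (Nat.div_pos hle (hc.n_pos j)) (Nat.sub_pos_of_lt (hc.n_lt j hj))

theorem eq_of_sum_mul_eq (hc : IsCofactorSystem n g N) {lam mu : Fin ν → ℕ}
    (hlam : IsReducedRep n lam) (hmu : IsReducedRep n mu)
    (h : ∑ k, lam k * g k = ∑ k, mu k * g k) : lam = mu := by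
  have hj : ∀ j, j ≠ 0 → lam j = mu j := fun j hj => by
    have hmod := fun la => sum_mul_modEq_single (fun k hk => hc.dvd j k hk.symm) la
    refine Nat.ModEq.eq_of_lt_of_lt ?_ (hlam j hj) (hmu j hj)
    exact Nat.ModEq.cancel_right_of_coprime (hc.coprime j) ((hmod lam).symm.trans (h ▸ hmod mu))
  have h0 : lam 0 = mu 0 := by
    rw [← add_sum_erase _ _ (mem_univ 0), ← add_sum_erase _ _ (mem_univ 0),
      sum_congr rfl fun k hk => by rw [hj k (ne_of_mem_erase hk)]] at h
    exact Nat.eq_of_mul_eq_mul_right (hc.g_pos 0) (Nat.add_right_cancel h)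
  funext k
  rcases eq_or_ne k 0 with rfl | hk
  exacts [h0, hj k hk]

theorem reduceRep_eq (hc : IsCofactorSystem n g N) {lam mu : Fin ν → ℕ}
    (hlam : IsReducedRep n lam) (h : ∑ k, mu k * g k = ∑ k, lam k * g k) :
    reduceRep n mu = lam :=
  hc.eq_of_sum_mul_eq (hc.isReducedRep_reduceRep mu) hlam ((hc.sum_reduceRep_mul mu).trans h)

theorem ordS_eq (hc : IsCofactorSystem n g N) (hgen : Generates S g) {lam : Fin ν → ℕ}
    (hlam : IsReducedRep n lam) : ordS S (∑ k, lam k * g k) = ∑ k, lam k :=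
  hgen.ordS_eq (fun i => (hc.g_pos i).ne') lam fun mu hmu =>
    hc.reduceRep_eq hlam hmu ▸ hc.sum_le_sum_reduceRep mu

theorem uniqueMaxRep (hc : IsCofactorSystem n g N) (hgen : Generates S g) {lam : Fin ν → ℕ}
    (hlam : IsReducedRep n lam) : UniqueMaxRep S g (∑ k, lam k * g k) := by
  refine ⟨lam, ⟨rfl, (hc.ordS_eq hgen hlam).symm⟩, fun mu ⟨hmu, hord⟩ => ?_⟩
  rw [hc.ordS_eq hgen hlam] at hord
  by_cases hred : IsReducedRep n mu
  · exact hc.eq_of_sum_mul_eq hred hlam hmu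
  · have := hc.sum_lt_sum_reduceRep hred
    rw [hc.reduceRep_eq hlam hmu] at this
    omega

theorem inApery_iff (hc : IsCofactorSystem n g N) (hgen : Generates S g) {s : ℕ} :
    InApery S (g 0) s ↔ ∃ lam, lam 0 = 0 ∧ IsReducedRep n lam ∧ ∑ k, lam k * g k = s := by
  constructor
  · rintro ⟨hs, hap⟩
    obtain ⟨mu, rfl⟩ := (hgen s).1 hs
    refine ⟨reduceRep n mu, ?_, hc.isReducedRep_reduceRep mu, hc.sum_reduceRep_mul mu⟩
    by_contra h0
    set lam := reduceRep n mu
    have hlam : lam - Pi.single 0 1 + Pi.single 0 1 = lam := by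
      funext k
      rcases eq_or_ne k 0 with rfl | hk
      · simp; omega
      · simp [hk]
    refine hap _ (hgen.sum_mul_mem (lam - Pi.single 0 1)) ?_
    rw [← sum_add_single_mul, hlam, hc.sum_reduceRep_mul]
  · rintro ⟨lam, h0, hlam, rfl⟩
    refine ⟨hgen.sum_mul_mem lam, fun u hu hsum => ?_⟩
    obtain ⟨mu, rfl⟩ := (hgen u).1 hu
    have hred : IsReducedRep n (reduceRep n mu + Pi.single 0 1) := fun j hj => by
      simpa [hj] using hc.isReducedRep_reduceRep mu j hj
    have := hc.eq_of_sum_mul_eq hred hlam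
      (by rw [sum_add_single_mul, hc.sum_reduceRep_mul, hsum])
    simpa [h0] using congrFun this 0

theorem gammaN_eq (hc : IsCofactorSystem n g N) (hgen : Generates S g) {i : Fin ν}
    (hi : i ≠ 0) : gammaN S (g 0) g i = n i - 1 := by
  refine IsGreatest.csSup_eq ⟨?_, ?_⟩
  · have hred : IsReducedRep n (Pi.single i (n i - 1)) := fun j hj => by
      rcases eq_or_ne j i with rfl | hji
      · simpa using hc.n_pos j
      · simpa [hji] using hc.n_pos j
    rw [Set.mem_ofPred_eq, ← sum_single_mul g i]
    refine ⟨(hc.inApery_iff hgen).2 ⟨_, by simp [hi.symm], hred, rfl⟩, ?_, hc.uniqueMaxRep hgen hred⟩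
    rw [hc.ordS_eq hgen hred]
    simp
  · rintro h ⟨⟨-, hap⟩, -⟩
    by_contra! hlt
    obtain ⟨d, rfl⟩ := Nat.exists_eq_add_of_le (show n i ≤ h by omega)
    obtain ⟨e, he⟩ := Nat.exists_eq_add_of_le' (hc.n_pos 0)
    -- `(n i + d) * g i = d * g i + e * g 0 + g 0`, as `n i * g i = n 0 * g 0`
    refine hap _ (hgen.add_mem (hgen.mul_mem d i) (hgen.mul_mem e 0)) ?_
    have := (hc.mul_eq i).trans (hc.mul_eq 0).symm
    rw [he] at this
    linarith

theorem aperySet_eq_gammaSet (hc : IsCofactorSystem n g N) (hgen : Generates S g) :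
    AperySet S (g 0) = GammaSet S (g 0) g := by
  refine Set.ext fun s => (hc.inApery_iff hgen).trans <|
    exists_congr fun lam => and_congr_right fun h0 => and_congr_left' ⟨fun hlam i => ?_, ?_⟩
  · rcases eq_or_ne i 0 with rfl | hi
    · exact h0 ▸ Nat.zero_le _
    · exact (hc.gammaN_eq hgen hi).symm ▸ Nat.le_sub_one_of_lt (hlam i hi)
  · exact fun hlam j hj => Nat.lt_of_le_sub_one (hc.n_pos j) (hc.gammaN_eq hgen hj ▸ hlam j)

end IsCofactorSystem

theorem pairwise_coprime_gammaRect_general {ν : ℕ} [NeZero ν]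
    (n : Fin ν → ℕ) (hpos : ∀ i, 0 < n i) (hanti : StrictAnti n)
    (hcop : ∀ i j, i ≠ j → Nat.Coprime (n i) (n j))
    (N : ℕ) (hN : N = ∏ i, n i)
    (g : Fin ν → ℕ) (hg : ∀ i, g i = N / n i)
    (S : Set ℕ) (hS : S = {s | ∃ lam : Fin ν → ℕ, ∑ i, lam i * g i = s}) :
    AperySet S (g 0) = GammaSet S (g 0) g ∧
      g 0 = ∏ i ∈ Finset.univ.erase 0, (gammaN S (g 0) g i + 1) := by
  have hc := isCofactorSystem_of_pairwise_coprime hpos hanti hcop hN hg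
  have hgen : Generates S g := by subst hS; exact fun _ => Iff.rfl
  refine ⟨hc.aperySet_eq_gammaSet hgen, ?_⟩
  calc g 0 = ∏ i ∈ univ.erase 0, n i := by rw [hg, hN, div_eq_prod_erase hpos]
    _ = ∏ i ∈ univ.erase 0, (gammaN S (g 0) g i + 1) := prod_congr rfl fun i hi => by
      rw [hc.gammaN_eq hgen (ne_of_mem_erase hi), Nat.sub_add_cancel (hpos i)]

theorem pairwise_coprime_gammaRect {ν : ℕ} [NeZero ν] (hν : 2 ≤ ν)
    (n : Fin ν → ℕ) (hpos : ∀ i, 0 < n i) (hanti : StrictAnti n)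
    (hcop : ∀ i j, i ≠ j → Nat.Coprime (n i) (n j))
    (N : ℕ) (hN : N = ∏ i, n i)
    (g : Fin ν → ℕ) (hg : ∀ i, g i = N / n i)
    (S : Set ℕ) (hS : S = {s | ∃ lam : Fin ν → ℕ, ∑ i, lam i * g i = s}) :
    AperySet S (g 0) = GammaSet S (g 0) g ∧
      g 0 = ∏ i ∈ Finset.univ.erase 0, (gammaN S (g 0) g i + 1) :=
  pairwise_coprime_gammaRect_general n hpos hanti hcop N hN g hg S hS
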